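/- arXiv:1202.0176 — 4 statements merged into one kernel-verified Lean document; each statement's English description precedes it below -/
import Mathlib

section
/- Let f : I → ℝ be q,ω-differentiable on I. Then D_{q,ω}[f](t) = 0 for every t ∈ I if and only if f is constant on I (i.e., f(t) = f(s) for all t,s ∈ I). -/
/-! Vanishing of `D_{q,ω}[f]` at `t ≠ ω₀` says `f (q t + ω) = f t`, so `f` is constant along the
orbit of `t` under `t ↦ q t + ω`. This affine contraction maps `I` into itself and its orbits
converge to the fixed point `ω₀`, where `f` is continuous, so `f t = f ω₀`. -/

noncomputable section

namespace Hahn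

/-- The fixed point `ω₀ = ω/(1-q)` of `t ↦ qt+ω`. -/
def omega0 (q ω : ℝ) : ℝ := ω / (1 - q)

/-- The Hahn difference operator of `f` (viewed as a function on the interval `I`):
for `t ≠ ω₀` it is `(f(qt+ω) - f(t))/((q-1)t+ω)`, and at `ω₀` it is the derivative of `f`
at `ω₀` (within `I`). -/
def hahnD (q ω : ℝ) (I : Set ℝ) (f : ℝ → ℝ) (t : ℝ) : ℝ :=
  if t = omega0 q ω then derivWithin f I t
  else (f (q * t + ω) - f t) / ((q - 1) * t + ω)

/-- `f` is `q,ω`-differentiable on `I`: the only nontrivial requirement is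
differentiability at `ω₀` (for `t ≠ ω₀` the Hahn quotient always exists). -/
def HahnDiffOn (q ω : ℝ) (I : Set ℝ) (f : ℝ → ℝ) : Prop :=
  DifferentiableWithinAt ℝ f I (omega0 q ω)

/-- The `q`-bracket `[k]_q = (1-q^k)/(1-q)`. -/
def qnum (q : ℝ) (k : ℕ) : ℝ := (1 - q ^ k) / (1 - q)

/-- The `k`-th term of the Jackson–Nörlund series of `f` at `x`. -/
def jnTerm (q ω : ℝ) (f : ℝ → ℝ) (x : ℝ) (k : ℕ) : ℝ :=
  q ^ k * f (q ^ k * x + ω * qnum q k)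

/-- The Jackson–Nörlund series of `f` converges at `x`. -/
def JNSummable (q ω : ℝ) (f : ℝ → ℝ) (x : ℝ) : Prop :=
  Summable (jnTerm q ω f x)

/-- The Jackson–Nörlund integral `∫_{ω₀}^x f(t) d_{q,ω}t`. -/
def jnInt0 (q ω : ℝ) (f : ℝ → ℝ) (x : ℝ) : ℝ :=
  (x * (1 - q) - ω) * ∑' k : ℕ, jnTerm q ω f x k

/-- The Jackson–Nörlund integral `∫_a^b f(t) d_{q,ω}t`. -/
def jnInt (q ω : ℝ) (f : ℝ → ℝ) (a b : ℝ) : ℝ :=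
  jnInt0 q ω f b - jnInt0 q ω f a

/-- `f` is `q,ω`-integrable on `[a,b]`. -/
def JNIntegrable (q ω : ℝ) (f : ℝ → ℝ) (a b : ℝ) : Prop :=
  JNSummable q ω f a ∧ JNSummable q ω f b

/-- The set `[s]_{q,ω} = {q^n s + ω[n]_q : n ∈ ℕ} ∪ {ω₀}`. -/
def qwOrbit (q ω s : ℝ) : Set ℝ :=
  {x | ∃ n : ℕ, x = q ^ n * s + ω * qnum q n} ∪ {omega0 q ω}

/-- The `q,ω`-interval `[a,b]_{q,ω}`. -/
def qwInterval (q ω a b : ℝ) : Set ℝ :=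
  qwOrbit q ω a ∪ qwOrbit q ω b

open Filter Topology

theorem apply_iterate_eq_of_mapsTo {α β : Type*} {T : α → α} {f : α → β} {s : Set α}
    (hT : Set.MapsTo T s s) (hf : ∀ x ∈ s, f (T x) = f x) {x : α} (hx : x ∈ s) (n : ℕ) :
    f (T^[n] x) = f x := by
  induction n with
  | zero => rfl
  | succ n ih => rw [Function.iterate_succ_apply', hf _ (hT.iterate n hx), ih]

theorem eq_of_tendsto_iterate {α β : Type*} [TopologicalSpace α] [TopologicalSpace β] [T2Space β]
    {T : α → α} {f : α → β} {s : Set α} {x y : α} (hf : ContinuousWithinAt f s y)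
    (hT : Tendsto (fun n ↦ T^[n] x) atTop (𝓝[s] y)) (hinv : ∀ n, f (T^[n] x) = f x) :
    f x = f y :=
  tendsto_nhds_unique (tendsto_const_nhds.congr fun n ↦ (hinv n).symm) (hf.tendsto.comp hT)

section AffineMap

variable {q ω : ℝ}

theorem omega0_mul_one_sub (hq : q ≠ 1) : omega0 q ω * (1 - q) = ω :=
  div_mul_cancel₀ ω (sub_ne_zero.mpr hq.symm)

theorem mul_add_eq_omega0_add (hq : q ≠ 1) (t : ℝ) :
    q * t + ω = omega0 q ω + q * (t - omega0 q ω) := by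
  linear_combination -omega0_mul_one_sub (ω := ω) hq

theorem iterate_mul_add (hq : q ≠ 1) (t : ℝ) (n : ℕ) :
    (fun x ↦ q * x + ω)^[n] t = omega0 q ω + q ^ n * (t - omega0 q ω) := by
  induction n with
  | zero => simp
  | succ n ih => rw [Function.iterate_succ_apply', ih, mul_add_eq_omega0_add hq]; ring

theorem tendsto_iterate_mul_add (hq : 0 ≤ q) (hq1 : q < 1) (t : ℝ) :
    Tendsto (fun n ↦ (fun x ↦ q * x + ω)^[n] t) atTop (𝓝 (omega0 q ω)) := by
  simp_rw [iterate_mul_add hq1.ne]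
  simpa using ((tendsto_pow_atTop_nhds_zero_of_lt_one hq hq1).mul_const
    (t - omega0 q ω)).const_add (omega0 q ω)

/-- `q t + ω = (1 - q) ω₀ + q t` lies between `ω₀` and `t`. -/
theorem mapsTo_mul_add {I : Set ℝ} (hI : I.OrdConnected) (hmem : omega0 q ω ∈ I)
    (hq : 0 ≤ q) (hq1 : q < 1) : Set.MapsTo (fun x ↦ q * x + ω) I I := by
  intro t ht
  change q * t + ω ∈ I
  have hcombo : q * t + ω = (1 - q) • omega0 q ω + q • t := by
    rw [smul_eq_mul, smul_eq_mul, mul_comm (1 - q), omega0_mul_one_sub hq1.ne]; ring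
  rw [hcombo]
  exact (convex_iff_ordConnected.mpr hI) hmem ht (by linarith) hq (by ring)

theorem apply_mul_add_eq_of_hahnD_eq_zero {I : Set ℝ} {f : ℝ → ℝ} {t : ℝ} (hq : q ≠ 1)
    (h : hahnD q ω I f t = 0) : f (q * t + ω) = f t := by
  by_cases ht : t = omega0 q ω
  · rw [mul_add_eq_omega0_add hq, ht, sub_self, mul_zero, add_zero]
  · rw [hahnD, if_neg ht, div_eq_zero_iff, sub_eq_zero] at h
    refine h.resolve_right ?_
    rw [show (q - 1) * t + ω = (q - 1) * (t - omega0 q ω) by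
      linear_combination -omega0_mul_one_sub (ω := ω) hq]
    exact mul_ne_zero (sub_ne_zero.mpr hq) (sub_ne_zero.mpr ht)

theorem hahnD_eq_zero_of_forall_eq {I : Set ℝ} {f : ℝ → ℝ} {t : ℝ}
    (hconst : ∀ x ∈ I, ∀ y ∈ I, f x = f y) (ht : t ∈ I) (hqt : q * t + ω ∈ I) :
    hahnD q ω I f t = 0 := by
  rw [hahnD]
  split_ifs
  · rw [derivWithin_congr (f := fun _ ↦ f t) (fun x hx ↦ hconst x hx t ht) rfl]
    exact congrFun (derivWithin_const I (f t)) t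
  · rw [hconst _ hqt t ht, sub_self, zero_div]

end AffineMap

theorem hahnD_eq_zero_iff_const_general
    (q ω : ℝ) (hq : 0 < q) (hq1 : q < 1)
    (I : Set ℝ) (hI : I.OrdConnected) (hmem : omega0 q ω ∈ I)
    (f : ℝ → ℝ) (hf : HahnDiffOn q ω I f) :
    (∀ t ∈ I, hahnD q ω I f t = 0) ↔ ∀ t ∈ I, ∀ s ∈ I, f t = f s := by
  have hmaps := mapsTo_mul_add hI hmem hq.le hq1
  refine ⟨fun h ↦ ?_, fun h t ht ↦ hahnD_eq_zero_of_forall_eq h ht (hmaps ht)⟩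
  have hinv : ∀ t ∈ I, f (q * t + ω) = f t :=
    fun t ht ↦ apply_mul_add_eq_of_hahnD_eq_zero hq1.ne (h t ht)
  suffices heq : ∀ t ∈ I, f t = f (omega0 q ω) from
    fun t ht s hs ↦ (heq t ht).trans (heq s hs).symm
  intro t ht
  exact eq_of_tendsto_iterate hf.continuousWithinAt
    (tendsto_nhdsWithin_iff.mpr ⟨tendsto_iterate_mul_add hq.le hq1 t,
      Eventually.of_forall fun n ↦ hmaps.iterate n ht⟩)
    (apply_iterate_eq_of_mapsTo hmaps hinv ht)

/-- `D_{q,ω}[f](t) = 0` for every `t ∈ I` iff `f` is constant on `I`. -/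
theorem hahnD_eq_zero_iff_const
    (q ω : ℝ) (hq : 0 < q) (hq1 : q < 1) (hω : 0 ≤ ω)
    (I : Set ℝ) (hI : I.OrdConnected) (hmem : omega0 q ω ∈ I)
    (f : ℝ → ℝ) (hf : HahnDiffOn q ω I f) :
    (∀ t ∈ I, hahnD q ω I f t = 0) ↔ ∀ t ∈ I, ∀ s ∈ I, f t = f s :=
  hahnD_eq_zero_iff_const_general q ω hq hq1 I hI hmem f hf

end Hahn
end
end

section
/- Let f : I → ℝ be continuous at ω₀. Then for every x ∈ I the series ∑_{k=0}^∞ q^k f(q^k x + ω[k]_q) converges absolutely; consequently f is q,ω-integrable on [a,b] for all a,b ∈ I. -/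
noncomputable section

namespace Hahn

/-! The evaluation points `q^k x + ω[k]_q = ω₀ + q^k (x - ω₀)` lie between `x` and `ω₀`, hence in
`I`, and converge to `ω₀`; so `f` is bounded along them by continuity at `ω₀`, and the series is
dominated by a geometric one. -/

open Filter Topology

lemma qnum_orbit_eq {q : ℝ} (hq : q ≠ 1) (ω x : ℝ) (k : ℕ) :
    q ^ k * x + ω * qnum q k = omega0 q ω + q ^ k * (x - omega0 q ω) := by
  have : 1 - q ≠ 0 := sub_ne_zero.2 hq.symm
  simp only [omega0, qnum]
  field_simp
  ring

lemma tendsto_qnum_orbit {q : ℝ} (hq : |q| < 1) (ω x : ℝ) :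
    Tendsto (fun k : ℕ => q ^ k * x + ω * qnum q k) atTop (𝓝 (omega0 q ω)) := by
  have hq1 : q ≠ 1 := fun h => by simp [h] at hq
  simp_rw [qnum_orbit_eq hq1]
  simpa using ((tendsto_pow_atTop_nhds_zero_of_abs_lt_one hq).mul_const
    (x - omega0 q ω)).const_add (omega0 q ω)

lemma qnum_orbit_mem {q ω x : ℝ} {I : Set ℝ} (hq : 0 ≤ q) (hq1 : q < 1) (hI : I.OrdConnected)
    (hmem : omega0 q ω ∈ I) (hx : x ∈ I) (k : ℕ) : q ^ k * x + ω * qnum q k ∈ I := by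
  rw [qnum_orbit_eq hq1.ne, ← smul_eq_mul]
  exact hI.convex.add_smul_sub_mem hmem hx ⟨pow_nonneg hq k, pow_le_one₀ hq hq1.le⟩

lemma summable_abs_pow_mul_of_tendsto {q c : ℝ} (hq : |q| < 1) {g : ℕ → ℝ}
    (hg : Tendsto g atTop (𝓝 c)) : Summable fun k : ℕ => |q ^ k * g k| := by
  refine summable_of_isBigO_nat (summable_geometric_of_lt_one (abs_nonneg q) hq) ?_
  simpa [abs_mul, abs_pow] using
    ((Asymptotics.isBigO_refl (fun k : ℕ => |q| ^ k) atTop).mul (hg.isBigO_one ℝ)).norm_left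

lemma summable_abs_jnTerm {q ω x : ℝ} {I : Set ℝ} {f : ℝ → ℝ} (hq : 0 ≤ q) (hq1 : q < 1)
    (hI : I.OrdConnected) (hmem : omega0 q ω ∈ I) (hf : ContinuousWithinAt f I (omega0 q ω))
    (hx : x ∈ I) : Summable fun k : ℕ => |jnTerm q ω f x k| :=
  have hq' : |q| < 1 := abs_lt.2 ⟨by linarith, hq1⟩
  summable_abs_pow_mul_of_tendsto hq' <| hf.tendsto.comp <| tendsto_nhdsWithin_iff.2
    ⟨tendsto_qnum_orbit hq' ω x, .of_forall (qnum_orbit_mem hq hq1 hI hmem hx)⟩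

theorem jn_summable_of_continuousAt_general
    (q ω : ℝ) (hq : 0 < q) (hq1 : q < 1)
    (I : Set ℝ) (hI : I.OrdConnected) (hmem : omega0 q ω ∈ I)
    (f : ℝ → ℝ) (hf : ContinuousWithinAt f I (omega0 q ω)) :
    (∀ x ∈ I, Summable fun k : ℕ => |jnTerm q ω f x k|) ∧
      ∀ a ∈ I, ∀ b ∈ I, JNIntegrable q ω f a b := by
  have hsum := fun x (hx : x ∈ I) => summable_abs_jnTerm hq.le hq1 hI hmem hf hx
  exact ⟨hsum, fun a ha b hb => ⟨(hsum a ha).of_abs, (hsum b hb).of_abs⟩⟩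

/-- if `f` is continuous at `ω₀` then the Jackson–Nörlund series converges
absolutely at every `x ∈ I`; consequently `f` is `q,ω`-integrable on `[a,b]` for all
`a, b ∈ I`. -/
theorem jn_summable_of_continuousAt
    (q ω : ℝ) (hq : 0 < q) (hq1 : q < 1) (hω : 0 ≤ ω)
    (I : Set ℝ) (hI : I.OrdConnected) (hmem : omega0 q ω ∈ I)
    (f : ℝ → ℝ) (hf : ContinuousWithinAt f I (omega0 q ω)) :
    (∀ x ∈ I, Summable fun k : ℕ => |jnTerm q ω f x k|) ∧
      ∀ a ∈ I, ∀ b ∈ I, JNIntegrable q ω f a b :=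
  jn_summable_of_continuousAt_general q ω hq hq1 I hI hmem f hf

end Hahn
end
end

section
/- Let f : I → ℝ be q,ω-differentiable on I. Then for all a,b ∈ I the function D_{q,ω}[f] is q,ω-integrable on [a,b] and ∫_a^b D_{q,ω}[f](t) d_{q,ω}t = f(b) − f(a). -/
/-!
The point `q ^ k * x + ω * [k]_q` is `ω₀ + qᵏ (x - ω₀)`, the `k`-th iterate of `t ↦ qt + ω`
started at `x`. For `x ≠ ω₀` the `k`-th term of the Jackson–Nörlund series of `D_{q,ω}[f]` at `x`
is therefore the increment of `f` between consecutive iterates divided by `(q - 1)(x - ω₀)`, and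
the series telescopes: the iterates tend to `ω₀`, so `∫_{ω₀}^x D_{q,ω}[f] = f x - f ω₀`.
Differentiability at `ω₀` is what makes the series converge absolutely, as unconditional
summation requires: it gives `f (ω₀ + qᵏ (x - ω₀)) - f ω₀ = O(qᵏ)`.
-/

noncomputable section

namespace Hahn

open Filter Topology

theorem _root_.Summable.hasSum_telescope {E : Type*} [NormedAddCommGroup E] {b : ℕ → E}
    (hb : Summable b) : HasSum (fun k ↦ b (k + 1) - b k) (-b 0) := by
  have hshift : HasSum (fun k ↦ b (k + 1)) (∑' k, b k - b 0) := by
    simpa using (hasSum_nat_add_iff' 1).2 hb.hasSum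
  simpa using hshift.sub hb.hasSum

theorem _root_.DifferentiableWithinAt.summable_sub_geometric {E : Type*} [NormedAddCommGroup E]
    [NormedSpace ℝ E] [CompleteSpace E] {f : ℝ → E} {s : Set ℝ} {w y r : ℝ}
    (hf : DifferentiableWithinAt ℝ f s w) (hr : |r| < 1) (hs : ∀ k : ℕ, w + r ^ k * y ∈ s) :
    Summable fun k : ℕ ↦ f (w + r ^ k * y) - f w := by
  have hlim : Tendsto (fun k : ℕ ↦ w + r ^ k * y) atTop (𝓝[s] w) := by
    refine tendsto_nhdsWithin_iff.2 ⟨?_, Eventually.of_forall hs⟩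
    simpa using ((tendsto_pow_atTop_nhds_zero_of_abs_lt_one hr).mul_const y).const_add w
  have hO : (fun k : ℕ ↦ f (w + r ^ k * y) - f w) =O[atTop] fun k ↦ r ^ k * y := by
    simpa [Function.comp_def] using hf.isBigO_sub.comp_tendsto hlim
  exact summable_of_isBigO_nat ((summable_geometric_of_abs_lt_one hr).mul_right y) hO

variable {q ω : ℝ}

theorem pow_mul_add_mul_qnum (hq : q ≠ 1) (x : ℝ) (k : ℕ) :
    q ^ k * x + ω * qnum q k = omega0 q ω + q ^ k * (x - omega0 q ω) := by
  have : (1 : ℝ) - q ≠ 0 := sub_ne_zero.2 hq.symm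
  rw [qnum, omega0]
  field_simp
  ring

theorem jnTerm_hahnD_of_ne (hq0 : q ≠ 0) (hq : q ≠ 1) (I : Set ℝ) (f : ℝ → ℝ) {x : ℝ}
    (hx : x ≠ omega0 q ω) (k : ℕ) :
    jnTerm q ω (hahnD q ω I f) x k =
      (f (omega0 q ω + q ^ (k + 1) * (x - omega0 q ω)) -
          f (omega0 q ω + q ^ k * (x - omega0 q ω))) / ((q - 1) * (x - omega0 q ω)) := by
  rw [jnTerm, pow_mul_add_mul_qnum hq]
  set w := omega0 q ω
  have hw : (q - 1) * w + ω = 0 := by linear_combination -omega0_mul_one_sub (ω := ω) hq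
  have hqk : q ^ k ≠ 0 := pow_ne_zero k hq0
  have hne : w + q ^ k * (x - w) ≠ w := by
    simpa [hqk, sub_eq_zero] using hx
  have hstep : q * (w + q ^ k * (x - w)) + ω = w + q ^ (k + 1) * (x - w) := by
    linear_combination hw
  have hden : (q - 1) * (w + q ^ k * (x - w)) + ω = q ^ k * ((q - 1) * (x - w)) := by
    linear_combination hw
  rw [hahnD, if_neg hne, hstep, hden]
  field_simp

theorem jnTerm_hahnD_omega0 (hq : q ≠ 1) (I : Set ℝ) (f : ℝ → ℝ) (k : ℕ) :
    jnTerm q ω (hahnD q ω I f) (omega0 q ω) k = derivWithin f I (omega0 q ω) * q ^ k := by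
  simp [jnTerm, pow_mul_add_mul_qnum hq, hahnD, mul_comm]

section FixedEndpoint

variable (hq : 0 < q) (hq1 : q < 1) {I : Set ℝ} (hI : I.OrdConnected)
  (hmem : omega0 q ω ∈ I) {f : ℝ → ℝ} (hf : HahnDiffOn q ω I f)
include hq hq1 hI hmem hf

theorem hasSum_jnTerm_hahnD_of_ne {x : ℝ} (hx : x ∈ I) (hxw : x ≠ omega0 q ω) :
    HasSum (jnTerm q ω (hahnD q ω I f) x)
      ((f x - f (omega0 q ω)) / ((1 - q) * (x - omega0 q ω))) := by
  have horbit : ∀ k : ℕ, omega0 q ω + q ^ k * (x - omega0 q ω) ∈ I := fun k ↦ by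
    simpa using hI.convex.add_smul_sub_mem hmem hx
      ⟨pow_nonneg hq.le k, pow_le_one₀ hq.le hq1.le⟩
  have hdiff : DifferentiableWithinAt ℝ f I (omega0 q ω) := hf
  have hsum := (hdiff.summable_sub_geometric (by rwa [abs_of_pos hq]) horbit).hasSum_telescope
  have hlimit : (f x - f (omega0 q ω)) / ((1 - q) * (x - omega0 q ω)) =
      -(f (omega0 q ω + q ^ 0 * (x - omega0 q ω)) - f (omega0 q ω)) /
        ((q - 1) * (x - omega0 q ω)) := by
    rw [pow_zero, one_mul, add_sub_cancel, ← neg_div_neg_eq]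
    ring
  rw [hlimit]
  refine (hsum.div_const _).congr_fun fun k ↦ ?_
  rw [jnTerm_hahnD_of_ne hq.ne' hq1.ne I f hxw k]
  ring

theorem jnSummable_hahnD_and_jnInt0_hahnD {x : ℝ} (hx : x ∈ I) :
    JNSummable q ω (hahnD q ω I f) x ∧
      jnInt0 q ω (hahnD q ω I f) x = f x - f (omega0 q ω) := by
  by_cases hxw : x = omega0 q ω
  · subst hxw
    refine ⟨?_, ?_⟩
    · exact ((summable_geometric_of_lt_one hq.le hq1).mul_left _).congr
        fun k ↦ (jnTerm_hahnD_omega0 hq1.ne I f k).symm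
    · rw [jnInt0, omega0_mul_one_sub hq1.ne]
      ring
  · have hsum := hasSum_jnTerm_hahnD_of_ne hq hq1 hI hmem hf hx hxw
    refine ⟨hsum.summable, ?_⟩
    have hfactor : x * (1 - q) - ω = (1 - q) * (x - omega0 q ω) := by
      linear_combination omega0_mul_one_sub (ω := ω) hq1.ne
    rw [jnInt0, hsum.tsum_eq, hfactor,
      mul_div_cancel₀ _ (mul_ne_zero (sub_ne_zero.2 hq1.ne') (sub_ne_zero.2 hxw))]

end FixedEndpoint

theorem integral_hahnD_general
    (q ω : ℝ) (hq : 0 < q) (hq1 : q < 1)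
    (I : Set ℝ) (hI : I.OrdConnected) (hmem : omega0 q ω ∈ I)
    (f : ℝ → ℝ) (hf : HahnDiffOn q ω I f) :
    ∀ a ∈ I, ∀ b ∈ I,
      JNIntegrable q ω (hahnD q ω I f) a b ∧
        jnInt q ω (hahnD q ω I f) a b = f b - f a := by
  intro a ha b hb
  obtain ⟨hsa, hia⟩ := jnSummable_hahnD_and_jnInt0_hahnD hq hq1 hI hmem hf ha
  obtain ⟨hsb, hib⟩ := jnSummable_hahnD_and_jnInt0_hahnD hq hq1 hI hmem hf hb
  exact ⟨⟨hsa, hsb⟩, by rw [jnInt, hia, hib]; ring⟩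

/-- Fundamental theorem of Hahn's calculus, second part: if `f` is
`q,ω`-differentiable on `I`, then `∫_a^b D_{q,ω}[f](t) d_{q,ω}t = f(b) - f(a)` for all
`a, b ∈ I`. -/
theorem integral_hahnD
    (q ω : ℝ) (hq : 0 < q) (hq1 : q < 1) (hω : 0 ≤ ω)
    (I : Set ℝ) (hI : I.OrdConnected) (hmem : omega0 q ω ∈ I)
    (f : ℝ → ℝ) (hf : HahnDiffOn q ω I f) :
    ∀ a ∈ I, ∀ b ∈ I,
      JNIntegrable q ω (hahnD q ω I f) a b ∧
        jnInt q ω (hahnD q ω I f) a b = f b - f a :=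
  integral_hahnD_general q ω hq hq1 I hI hmem f hf

end Hahn
end
end

section
/- (Differentiation under the Jackson–Nörlund integral) Let s ∈ I with s ≠ ω₀, let θ̄ > 0, θ₀ ∈ (−θ̄, θ̄), and let g : I × (−θ̄, θ̄) → ℝ be differentiable at θ₀ uniformly in [s]_{q,ω}. Suppose that G(θ) := ∫_{ω₀}^s g(t,θ) d_{q,ω}t exists for all θ in a neighborhood of θ₀ and that ∫_{ω₀}^s ∂₂g(t,θ₀) d_{q,ω}t exists. Then G is differentiable at θ₀ and G′(θ₀) = ∫_{ω₀}^s ∂₂g(t,θ₀) d_{q,ω}t. -/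
/-!
The integral `∫_{ω₀}^s g(t,θ) d_{q,ω}t` is `(s(1-q) - ω) ∑ q^k g(t_k, θ)` over the orbit points
`t_k = q^k s + ω[k]_q`, so its difference quotient in `θ` is the series of difference quotients
of `g(t_k, ·)` weighted by the summable `q^k`. These converge uniformly in `k`, hence are eventually
dominated by `q^k (|∂₂g(t_k,θ₀)| + 1)`, and Tannery's theorem passes the limit through the series.
-/

noncomputable section

namespace Hahn

open Filter Topology

section WeightedSeries

variable {α β : Type*}

theorem tendsto_tsum_mul_of_tendstoUniformly {l : Filter α} {w : β → ℝ} {f : α → β → ℝ}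
    {f₀ : β → ℝ} (hw : Summable w) (hwf₀ : Summable fun k => w k * f₀ k)
    (hf : TendstoUniformly f f₀ l) :
    Tendsto (fun a => ∑' k, w k * f a k) l (𝓝 (∑' k, w k * f₀ k)) := by
  refine tendsto_tsum_of_dominated_convergence (bound := fun k => |w k| * (|f₀ k| + 1))
    ?_ (fun k => (hf.tendsto_at k).const_mul (w k)) ?_
  · simpa only [mul_add, mul_one, abs_mul] using hwf₀.abs.add hw.abs
  · filter_upwards [Metric.tendstoUniformly_iff.mp hf 1 one_pos] with a ha k
    rw [Real.norm_eq_abs, abs_mul]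
    gcongr
    have := ha k
    rw [Real.dist_eq] at this
    linarith [abs_sub_abs_le_abs_sub (f a k) (f₀ k), abs_sub_comm (f₀ k) (f a k)]

theorem slope_tsum_mul {w : β → ℝ} {F : β → ℝ → ℝ} {x y : ℝ}
    (hx : Summable fun k => w k * F k x) (hy : Summable fun k => w k * F k y) :
    slope (fun z => ∑' k, w k * F k z) x y = ∑' k, w k * slope (F k) x y := by
  simp only [slope_def_field]
  rw [← hy.tsum_sub hx, ← tsum_div_const]
  congr 1 with k
  ring

theorem hasDerivAt_tsum_mul_of_tendstoUniformly_slope {w : β → ℝ} {F : β → ℝ → ℝ}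
    {F' : β → ℝ} {x : ℝ} (hw : Summable w)
    (hF : ∀ᶠ y in 𝓝 x, Summable fun k => w k * F k y) (hwF' : Summable fun k => w k * F' k)
    (hslope : TendstoUniformly (fun y k => slope (F k) x y) F' (𝓝[≠] x)) :
    HasDerivAt (fun y => ∑' k, w k * F k y) (∑' k, w k * F' k) x := by
  rw [hasDerivAt_iff_tendsto_slope]
  refine (tendsto_tsum_mul_of_tendstoUniformly hw hwF' hslope).congr' ?_
  filter_upwards [nhdsWithin_le_nhds hF] with y hy
  exact (slope_tsum_mul hF.self_of_nhds hy).symm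

end WeightedSeries

theorem deriv_under_jn_integral_general
    (q ω : ℝ) (hq : 0 < q) (hq1 : q < 1)
    (s : ℝ) (θ₀ : ℝ) (g : ℝ → ℝ → ℝ)
    -- `g(t,·)` is differentiable at `θ₀` uniformly in `[s]_{q,ω}`:
    (hunif : ∀ ε : ℝ, 0 < ε → ∃ δ : ℝ, 0 < δ ∧ ∀ θ : ℝ, 0 < |θ - θ₀| → |θ - θ₀| < δ →
      ∀ t ∈ qwOrbit q ω s,
        |(g t θ - g t θ₀) / (θ - θ₀) - deriv (fun θ' => g t θ') θ₀| < ε)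
    -- `G(θ) = ∫_{ω₀}^s g(t,θ) d_{q,ω}t` exists for `θ` near `θ₀`:
    (hG : ∃ r : ℝ, 0 < r ∧ ∀ θ : ℝ, |θ - θ₀| < r → JNSummable q ω (fun t => g t θ) s)
    -- `∫_{ω₀}^s ∂₂g(t,θ₀) d_{q,ω}t` exists:
    (hpd : JNSummable q ω (fun t => deriv (fun θ' => g t θ') θ₀) s) :
    HasDerivAt (fun θ => jnInt0 q ω (fun t => g t θ) s)
      (jnInt0 q ω (fun t => deriv (fun θ' => g t θ') θ₀) s) θ₀ := by
  obtain ⟨r, hr, hGr⟩ := hG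
  have hsummable : ∀ᶠ θ in 𝓝 θ₀, JNSummable q ω (fun t => g t θ) s :=
    Metric.eventually_nhds_iff.mpr ⟨r, hr, fun {θ} hθ => hGr θ hθ⟩
  have hslope : TendstoUniformly
      (fun θ k => slope (fun θ' => g (q ^ k * s + ω * qnum q k) θ') θ₀ θ)
      (fun k => deriv (fun θ' => g (q ^ k * s + ω * qnum q k) θ') θ₀) (𝓝[≠] θ₀) := by
    refine Metric.tendstoUniformly_iff.mpr fun ε hε => ?_
    obtain ⟨δ, hδ, hδε⟩ := hunif ε hε
    filter_upwards [self_mem_nhdsWithin, nhdsWithin_le_nhds (Metric.ball_mem_nhds θ₀ hδ)]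
      with θ hθ hθδ k
    rw [Real.dist_eq, abs_sub_comm, slope_def_field]
    exact hδε θ (abs_pos.mpr (sub_ne_zero.mpr hθ)) hθδ _ (Or.inl ⟨k, rfl⟩)
  simpa only [jnInt0, jnTerm] using
    (hasDerivAt_tsum_mul_of_tendstoUniformly_slope (summable_geometric_of_lt_one hq.le hq1)
      hsummable hpd hslope).const_mul (s * (1 - q) - ω)

/-- differentiation under the Jackson–Nörlund integral sign. -/
theorem deriv_under_jn_integral
    (q ω : ℝ) (hq : 0 < q) (hq1 : q < 1) (hω : 0 ≤ ω)
    (I : Set ℝ) (hI : I.OrdConnected) (hmem : omega0 q ω ∈ I)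
    (s : ℝ) (hs : s ∈ I) (hsω : s ≠ omega0 q ω)
    (θbar θ₀ : ℝ) (hθbar : 0 < θbar) (hθ₀ : θ₀ ∈ Set.Ioo (-θbar) θbar)
    (g : ℝ → ℝ → ℝ)
    -- `g(t,·)` is differentiable at `θ₀` uniformly in `[s]_{q,ω}`:
    (hdiff : ∀ t ∈ qwOrbit q ω s, DifferentiableAt ℝ (fun θ => g t θ) θ₀)
    (hunif : ∀ ε : ℝ, 0 < ε → ∃ δ : ℝ, 0 < δ ∧ ∀ θ : ℝ, 0 < |θ - θ₀| → |θ - θ₀| < δ →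
      ∀ t ∈ qwOrbit q ω s,
        |(g t θ - g t θ₀) / (θ - θ₀) - deriv (fun θ' => g t θ') θ₀| < ε)
    -- `G(θ) = ∫_{ω₀}^s g(t,θ) d_{q,ω}t` exists for `θ` near `θ₀`:
    (hG : ∃ r : ℝ, 0 < r ∧ ∀ θ : ℝ, |θ - θ₀| < r → JNSummable q ω (fun t => g t θ) s)
    -- `∫_{ω₀}^s ∂₂g(t,θ₀) d_{q,ω}t` exists:
    (hpd : JNSummable q ω (fun t => deriv (fun θ' => g t θ') θ₀) s) :
    HasDerivAt (fun θ => jnInt0 q ω (fun t => g t θ) s)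
      (jnInt0 q ω (fun t => deriv (fun θ' => g t θ') θ₀) s) θ₀ :=
  deriv_under_jn_integral_general q ω hq hq1 s θ₀ g hunif hG hpd

end Hahn
end
end
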